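/- Let h, A, B be g-symmetric endomorphisms of V. For t ∈ ℝ small enough that g_t(x, y) := g((Id + t h)(x), y) is an inner product, let ⟨A, B⟩_{g_t} := tr(A ∘ B^{*_{g_t}}) denote the induced inner product on End(V), where B^{*_{g_t}} is the adjoint of B with respect to g_t. Then the function t ↦ ⟨A, B⟩_{g_t} is differentiable at t = 0 with derivative equal to 0. -/

import Mathlib

/-!
For `t` near `0` the `g_t`-adjoint of the `g`-symmetric map `B` is `M_t⁻¹ B M_t` with
`M_t = 1 + t h`, so its derivative at `0` is the commutator `⁅B, h⁆`. The trace of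
`A ⁅B, h⁆ = ABh - AhB` vanishes: taking adjoints preserves real traces and reverses the product
`AhB` of symmetric maps into `BhA`, which has the same trace as `ABh` by cyclicity.
-/

open RealInnerProductSpace Filter

namespace LinearMap

variable {𝕜 E : Type*} [RCLike 𝕜] [NormedAddCommGroup E] [InnerProductSpace 𝕜 E]

theorem trace_adjoint [FiniteDimensional 𝕜 E] (T : E →ₗ[𝕜] E) :
    trace 𝕜 E (adjoint T) = star (trace 𝕜 E T) := by
  simp only [trace_eq_sum_inner _ (stdOrthonormalBasis 𝕜 E), adjoint_inner_right, star_sum,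
    RCLike.star_def, inner_conj_symm]

/-- `S` is the adjoint of `B` for the form `⟪M ·, ·⟫`. -/
theorem mul_eq_mul_of_inner_map_eq {M B S : E →ₗ[𝕜] E} (hM : M.IsSymmetric)
    (hB : B.IsSymmetric) (hS : ∀ x y, inner 𝕜 (M (B x)) y = inner 𝕜 (M x) (S y)) :
    M * S = B * M := by
  ext y
  refine ext_inner_left 𝕜 fun x => ?_
  calc inner 𝕜 x (M (S y)) = inner 𝕜 (M x) (S y) := (hM x _).symm
    _ = inner 𝕜 (M (B x)) y := (hS x y).symm
    _ = inner 𝕜 x (B (M y)) := by rw [hM, hB]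

section Real

variable {E : Type*} [NormedAddCommGroup E] [InnerProductSpace ℝ E] [FiniteDimensional ℝ E]
  {A B C : E →ₗ[ℝ] E}

theorem IsSymmetric.trace_mul_mul_comm (hA : A.IsSymmetric) (hB : B.IsSymmetric)
    (hC : C.IsSymmetric) : trace ℝ E (A * B * C) = trace ℝ E (C * B * A) := by
  rw [← star_trivial (trace ℝ E (A * B * C)), ← trace_adjoint, ← star_eq_adjoint, star_mul,
    star_mul, star_eq_adjoint, star_eq_adjoint, star_eq_adjoint, hA.adjoint_eq, hB.adjoint_eq,
    hC.adjoint_eq, mul_assoc]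

theorem IsSymmetric.trace_mul_lie_eq_zero (hA : A.IsSymmetric) (hB : B.IsSymmetric)
    (hC : C.IsSymmetric) : trace ℝ E (A * ⁅B, C⁆) = 0 := by
  rw [Ring.lie_def, mul_sub, map_sub, ← mul_assoc, ← mul_assoc, hA.trace_mul_mul_comm hC hB,
    trace_mul_cycle ℝ B C A, sub_self]

end Real

end LinearMap

section NormedAlgebra

variable {R : Type*} [NormedRing R] [NormedAlgebra ℝ R]

theorem eventually_isUnit_one_add_smul [HasSummableGeomSeries R] (h : R) :
    ∀ᶠ t in nhds (0 : ℝ), IsUnit (1 + t • h) := by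
  have hcont : Continuous fun t : ℝ => 1 + t • h := by fun_prop
  refine hcont.continuousAt.eventually (Units.isOpen.mem_nhds ?_)
  simp

theorem hasDerivAt_one_add_smul (h : R) (t : ℝ) : HasDerivAt (fun t : ℝ => 1 + t • h) h t := by
  simpa using ((hasDerivAt_id' t).smul_const h).const_add (1 : R)

theorem hasDerivAt_inverse_one_add_smul [HasSummableGeomSeries R] (h : R) :
    HasDerivAt (fun t : ℝ => Ring.inverse (1 + t • h)) (-h) 0 :=
  ((hasFDerivAt_ringInverse (1 : Rˣ)).comp_hasDerivAt_of_eq 0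
    (hasDerivAt_one_add_smul h 0) (by simp)).congr_deriv (by simp)

theorem hasDerivAt_inverse_one_add_smul_mul_mul [HasSummableGeomSeries R] (h b : R) :
    HasDerivAt (fun t : ℝ => Ring.inverse (1 + t • h) * b * (1 + t • h)) (b * h - h * b) 0 := by
  refine (((hasDerivAt_inverse_one_add_smul h).mul_const b).mul
    (hasDerivAt_one_add_smul h 0)).congr_deriv ?_
  simp [sub_eq_neg_add]

end NormedAlgebra

/-- for `g`-symmetric endomorphisms `h, A, B`, the function
`t ↦ ⟨A, B⟩_{g_t} = tr(A ∘ B^{*_{g_t}})`, where `B^{*_{g_t}}` is the adjoint of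
`B` with respect to `g_t(x,y) = g((Id + t h) x, y)` (characterized for `t` near
`0` by `g_t(B x, y) = g_t(x, B^{*_{g_t}} y)`), is differentiable at `t = 0`
with derivative `0`. -/
theorem stmt_7 {V : Type*} [NormedAddCommGroup V] [InnerProductSpace ℝ V]
    [FiniteDimensional ℝ V]
    (h A B : Module.End ℝ V)
    (hsym : ∀ x y : V, ⟪h x, y⟫ = ⟪x, h y⟫)
    (hAsym : ∀ x y : V, ⟪A x, y⟫ = ⟪x, A y⟫)
    (hBsym : ∀ x y : V, ⟪B x, y⟫ = ⟪x, B y⟫)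
    (Bstar : ℝ → Module.End ℝ V)
    (hBstar : ∀ᶠ t in nhds (0 : ℝ),
      ∀ x y : V, ⟪(1 + t • h) (B x), y⟫ = ⟪(1 + t • h) x, Bstar t y⟫) :
    HasDerivAt (fun t : ℝ => LinearMap.trace ℝ V (A ∘ₗ Bstar t)) 0 0 := by
  -- `Module.End ℝ V` carries no norm; we differentiate in the normed algebra `V →L[ℝ] V`.
  let e := Module.End.toContinuousLinearMap (𝕜 := ℝ) V
  let φ : (V →L[ℝ] V) →L[ℝ] ℝ := LinearMap.toContinuousLinearMap
    (LinearMap.trace ℝ V ∘ₗ LinearMap.mulLeft ℝ A ∘ₗ e.symm.toLinearMap)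
  have hconj : ∀ᶠ t in nhds 0,
      e (Bstar t) = Ring.inverse (1 + t • e h) * e B * (1 + t • e h) := by
    filter_upwards [hBstar, eventually_isUnit_one_add_smul (e h)] with t ht hunit
    have hM : (1 + t • h).IsSymmetric := LinearMap.IsSymmetric.one.add (.smul (by simp) hsym)
    have hcomm : (1 + t • e h) * e (Bstar t) = e B * (1 + t • e h) := by
      simpa using congrArg e (LinearMap.mul_eq_mul_of_inner_map_eq hM hBsym ht)
    rw [mul_assoc, ← hcomm, Ring.inverse_mul_cancel_left _ _ hunit]
  have hφ : φ (e B * e h - e h * e B) = 0 := by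
    rw [← map_mul, ← map_mul, ← map_sub, ← Ring.lie_def]
    simpa [φ] using LinearMap.IsSymmetric.trace_mul_lie_eq_zero hAsym hBsym hsym
  have hderiv := φ.hasFDerivAt.comp_hasDerivAt 0
    (hasDerivAt_inverse_one_add_smul_mul_mul (e h) (e B))
  rw [hφ] at hderiv
  refine hderiv.congr_of_eventuallyEq ?_
  filter_upwards [hconj] with t ht
  simp [φ, ← ht, Module.End.mul_eq_comp]
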